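/- Let u and v be decomposable vectors in ∧^W ℝ^{2W} with matrices [u] = [A_u; B_u] and [v] = [A_v; B_v] (2W × W matrices split into top and bottom W × W blocks), and suppose A_u and A_v are invertible. Let S₁, …, S_N be W × W symmetric matrices, E ∈ ℝ, and define T = ∏_{k=N}^{1} [[S_k − E, −I],[I, 0]]. Then det([v]ᵗ T [u]) = det(A_u) det(A_v) · det(H − E), where H is the NW × NW block-tridiagonal matrix with off-diagonal blocks −I and diagonal blocks S₁ − B_u A_u^{-1}, S₂, …, S_{N−1}, S_N + (B_v A_v^{-1})ᵗ. -/

import Mathlib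

/-!
Write `[u] = [1; U] A_u` and `[v]ᵀ = A_vᵀ [1, V]` with `U = B_u A_u⁻¹`, `V = (B_v A_v⁻¹)ᵀ`.
Since `[[D, -1], [1, 0]] [1; U] = [[D - U, -1], [1, 0]] [1; 0]` and
`[1, V] [[D, -1], [1, 0]] = [1, 0] [[D + V, -1], [1, 0]]`, the boundary terms are absorbed into
the first and last transfer matrices, and `[v]ᵀ T [u] = A_vᵀ C_N A_u`, where `C_N` is the
top-left block of the transfer product for the diagonal blocks `G_k` of `H - E`, i.e. the block
continuant `C_{k+1} = G_k C_k - C_{k-1}`, `C_0 = 1`, `C_{-1} = 0`.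

It remains to see `det (tridiag G) = det C_N` over any commutative ring. Multiplying the block
tridiagonal matrix on the right by the block unitriangular matrix with first block column
`(C_0, …, C_{N-1})` turns its first block column into `(0, …, 0, C_N)`; a cyclic shift of the
block columns then leaves a block lower triangular matrix with diagonal blocks `-1, …, -1, C_N`,
and the two signs `(-1)^{W(N-1)}` cancel.
-/

open Matrix

namespace BlockTridiagonal

variable {R : Type*} [CommRing R] {n : Type*} [DecidableEq n]

section Transfer

variable [Fintype n]

def transferMatrix (D : Matrix n n R) : Matrix (n ⊕ n) (n ⊕ n) R := fromBlocks D (-1) 1 0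

def transferProd (G : ℕ → Matrix n n R) : ℕ → Matrix (n ⊕ n) (n ⊕ n) R
  | 0 => 1
  | k + 1 => transferMatrix (G k) * transferProd G k

lemma list_prod_eq_transferProd (G : ℕ → Matrix n n R) (N : ℕ) :
    (List.ofFn fun k : Fin N => transferMatrix (G k)).reverse.prod = transferProd G N := by
  induction N with
  | zero => rfl
  | succ N ih =>
    rw [List.ofFn_succ', List.concat_eq_append, List.reverse_append, List.reverse_singleton,
      List.singleton_append, List.prod_cons]
    simp [transferProd, ← ih]

lemma transferProd_congr {G G' : ℕ → Matrix n n R} {N : ℕ} (h : ∀ k < N, G k = G' k) :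
    transferProd G N = transferProd G' N := by
  induction N with
  | zero => rfl
  | succ N ih =>
    rw [transferProd, transferProd, h N N.lt_succ_self, ih fun k hk => h k (by omega)]

/-- `continuant G (k + 1)` is `C_k`: the shift gives `C_{-1} = 0` an index, so that the
recurrence `C_{k+1} = G_k C_k - C_{k-1}` holds for every `k ≥ 0`. -/
def continuant (G : ℕ → Matrix n n R) : ℕ → Matrix n n R
  | 0 => 0
  | 1 => 1
  | k + 2 => G k * continuant G (k + 1) - continuant G k

lemma transferProd_mul_fromRows_one_zero (G : ℕ → Matrix n n R) (k : ℕ) :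
    transferProd G k * (fromRows 1 0 : Matrix (n ⊕ n) n R) =
      fromRows (continuant G (k + 1)) (continuant G k) := by
  induction k with
  | zero => simp [transferProd, continuant]
  | succ k ih =>
    rw [transferProd, Matrix.mul_assoc, ih, transferMatrix, fromBlocks_mul_fromRows]
    simp [continuant, sub_eq_add_neg]

lemma transferMatrix_mul_fromRows_one (D U : Matrix n n R) :
    transferMatrix D * (fromRows 1 U : Matrix (n ⊕ n) n R) =
      transferMatrix (D - U) * (fromRows 1 0 : Matrix (n ⊕ n) n R) := by
  simp [transferMatrix, fromBlocks_mul_fromRows, sub_eq_add_neg]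

lemma fromCols_one_mul_transferMatrix (V D : Matrix n n R) :
    (fromCols 1 V : Matrix n (n ⊕ n) R) * transferMatrix D =
      (fromCols 1 0 : Matrix n (n ⊕ n) R) * transferMatrix (D + V) := by
  simp [transferMatrix, fromCols_mul_fromBlocks]

lemma transferProd_mul_fromRows_one (G : ℕ → Matrix n n R) (U : Matrix n n R) (k : ℕ) :
    transferProd G (k + 1) * (fromRows 1 U : Matrix (n ⊕ n) n R) =
      transferProd (fun i => G i + if i = 0 then -U else 0) (k + 1) *
        (fromRows 1 0 : Matrix (n ⊕ n) n R) := by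
  induction k with
  | zero =>
    simp [transferProd, transferMatrix_mul_fromRows_one, sub_eq_add_neg]
  | succ k ih =>
    rw [transferProd, Matrix.mul_assoc, ih, ← Matrix.mul_assoc]
    simp [transferProd]

lemma fromCols_one_mul_transferProd (V : Matrix n n R) (G : ℕ → Matrix n n R) (k : ℕ) :
    (fromCols 1 V : Matrix n (n ⊕ n) R) * transferProd G (k + 1) =
      (fromCols 1 0 : Matrix n (n ⊕ n) R) *
        transferProd (fun i => G i + if i = k then V else 0) (k + 1) := by
  have hG : transferProd G k = transferProd (fun i => G i + if i = k then V else 0) k :=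
    transferProd_congr fun i hi => by simp [hi.ne]
  rw [transferProd, transferProd, ← Matrix.mul_assoc, fromCols_one_mul_transferMatrix,
    Matrix.mul_assoc, if_pos rfl, hG]

lemma fromCols_mul_transferProd_mul_fromRows (U V : Matrix n n R) (D : ℕ → Matrix n n R)
    (k : ℕ) :
    (fromCols 1 V : Matrix n (n ⊕ n) R) * transferProd D (k + 1) *
        (fromRows 1 U : Matrix (n ⊕ n) n R) =
      continuant (fun i => D i + (if i = 0 then -U else 0) + (if i = k then V else 0)) (k + 2) := by
  rw [Matrix.mul_assoc, transferProd_mul_fromRows_one, ← Matrix.mul_assoc,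
    fromCols_one_mul_transferProd, Matrix.mul_assoc, transferProd_mul_fromRows_one_zero,
    fromCols_mul_fromRows]
  simp

lemma fromRows_eq_fromRows_one_mul {A B : Matrix n n R} (hA : IsUnit A.det) :
    fromRows A B = (fromRows 1 (B * A⁻¹) : Matrix (n ⊕ n) n R) * A := by
  rw [fromRows_mul, Matrix.one_mul, nonsing_inv_mul_cancel_right _ _ hA]

lemma transpose_fromRows_eq_mul_fromCols_one {A B : Matrix n n R} (hA : IsUnit A.det) :
    (fromRows A B)ᵀ = Aᵀ * (fromCols 1 (B * A⁻¹)ᵀ : Matrix n (n ⊕ n) R) := by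
  rw [fromRows_eq_fromRows_one_mul hA, transpose_mul, transpose_fromRows, transpose_one]

end Transfer

section Tridiagonal

variable (N : ℕ) (G : ℕ → Matrix n n R)

def blockTridiagonal : Matrix (Fin N) (Fin N) (Matrix n n R) :=
  of fun i j => if i = j then G i else if (i : ℕ) + 1 = j ∨ (j : ℕ) + 1 = i then -1 else 0

lemma comp_blockTridiagonal_apply (i j : Fin N) (x y : n) :
    comp _ _ n n R (blockTridiagonal N G) (i, x) (j, y) =
      if i = j then G i x y
      else if (i : ℕ) + 1 = j ∨ (j : ℕ) + 1 = i then (if x = y then -1 else 0) else 0 := by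
  simp only [comp_apply, blockTridiagonal, of_apply]
  split_ifs <;> simp [*]

variable [Fintype n]

lemma det_comp_of_blockTriangular_toDual {ι : Type*} [Fintype ι] [LinearOrder ι]
    (M : Matrix ι ι (Matrix n n R)) (h : M.BlockTriangular OrderDual.toDual) :
    (comp ι ι n n R M).det = ∏ i, (M i i).det := by
  rw [h.comp.det_fintype]
  refine Fintype.prod_equiv OrderDual.ofDual _ _ fun i => ?_
  let e : n ≃ {p : ι × n // OrderDual.toDual p.1 = i} :=
    { toFun x := ⟨(OrderDual.ofDual i, x), rfl⟩
      invFun p := p.1.2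
      left_inv _ := rfl
      right_inv := by rintro ⟨⟨_, _⟩, rfl⟩; rfl }
  rw [← det_submatrix_equiv_self e]
  rfl

def continuantShear : Matrix (Fin N) (Fin N) (Matrix n n R) :=
  of fun i j => if (j : ℕ) = 0 then continuant G (i + 1) else if i = j then 1 else 0

lemma sum_blockTridiagonal_mul_continuant (i : Fin N) :
    ∑ k, blockTridiagonal N G i k * continuant G (k + 1) =
      if (i : ℕ) + 1 = N then continuant G (N + 1) else 0 := by
  obtain ⟨i, hi⟩ := i
  have hterm : ∀ k : Fin N, blockTridiagonal N G ⟨i, hi⟩ k * continuant G (k + 1) =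
      (if (k : ℕ) = i then G i * continuant G (i + 1) else 0) -
      (if (k : ℕ) = i + 1 then continuant G (i + 2) else 0) -
      (if (k : ℕ) + 1 = i then continuant G i else 0) := by
    intro ⟨k, hk⟩
    simp only [blockTridiagonal, of_apply, Fin.ext_iff]
    split_ifs <;> first | omega | (subst_vars; simp)
  rw [Fintype.sum_congr _ _ hterm, Finset.sum_sub_distrib, Finset.sum_sub_distrib,
    Fin.sum_univ_eq_sum_range (fun k => if k = i then _ else 0),
    Fin.sum_univ_eq_sum_range (fun k => if k = i + 1 then _ else 0),
    Fin.sum_univ_eq_sum_range (fun k => if k + 1 = i then _ else 0),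
    Finset.sum_ite_eq', Finset.sum_ite_eq']
  have hlast : ∑ k ∈ Finset.range N, (if k + 1 = i then continuant G i else 0) =
      continuant G i := by
    rcases i with _ | m
    · simp [continuant]
    · simp [hi.trans' m.lt_succ_self]
  have hrec : G i * continuant G (i + 1) - continuant G i = continuant G (i + 2) := rfl
  rw [hlast, sub_right_comm, if_pos (Finset.mem_range.2 hi), hrec]
  by_cases h : i + 1 = N
  · subst h
    simp
  · simp [h, show i + 1 < N by omega]

lemma blockTridiagonal_mul_continuantShear :
    blockTridiagonal N G * continuantShear N G = of fun i j : Fin N =>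
      if (j : ℕ) = 0 then (if (i : ℕ) + 1 = N then continuant G (N + 1) else 0)
      else blockTridiagonal N G i j := by
  ext1 i j
  by_cases hj : (j : ℕ) = 0
  · simp [mul_apply, continuantShear, hj, sum_blockTridiagonal_mul_continuant]
  · simp [mul_apply, continuantShear, hj]

lemma det_continuantShear : (comp _ _ n n R (continuantShear N G)).det = 1 := by
  rw [det_comp_of_blockTriangular_toDual]
  · refine Finset.prod_eq_one fun i _ => ?_
    by_cases hi : (i : ℕ) = 0 <;> simp [continuantShear, hi, continuant]
  · intro i j (hij : i < j)
    have hj : (j : ℕ) ≠ 0 := by have : (i : ℕ) < j := hij; omega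
    simp [continuantShear, hij.ne, hj]

lemma blockTriangular_blockTridiagonal_mul_continuantShear_rotate (m : ℕ) :
    ((blockTridiagonal (m + 1) G * continuantShear (m + 1) G).submatrix id
      (finRotate (m + 1))).BlockTriangular OrderDual.toDual := by
  intro i j (hij : i < j)
  have hij' : (i : ℕ) < j := hij
  rw [blockTridiagonal_mul_continuantShear]
  simp only [submatrix_apply, id, of_apply, blockTridiagonal, Fin.ext_iff, coe_finRotate]
  split_ifs <;> first | rfl | omega

lemma blockTridiagonal_mul_continuantShear_rotate_apply_self (m : ℕ) (i : Fin (m + 1)) :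
    (blockTridiagonal (m + 1) G * continuantShear (m + 1) G).submatrix id (finRotate (m + 1)) i i
      = if i = Fin.last m then continuant G (m + 2) else -1 := by
  rw [blockTridiagonal_mul_continuantShear]
  simp only [submatrix_apply, id, of_apply, blockTridiagonal, Fin.ext_iff, coe_finRotate,
    Fin.val_last]
  split_ifs <;> first | rfl | omega | contradiction

theorem det_comp_blockTridiagonal :
    (comp _ _ n n R (blockTridiagonal N G)).det = (continuant G (N + 1)).det := by
  cases N with
  | zero => simp [continuant]
  | succ m =>
    set T := blockTridiagonal (m + 1) G
    set U := continuantShear (m + 1) G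
    set s : R := (-1) ^ (Fintype.card n * m)
    have hrot : (comp _ _ n n R ((T * U).submatrix id (finRotate (m + 1)))).det =
        s * (continuant G (m + 2)).det := by
      rw [det_comp_of_blockTriangular_toDual _
        (blockTriangular_blockTridiagonal_mul_continuantShear_rotate G m), Fin.prod_univ_castSucc]
      simp only [blockTridiagonal_mul_continuantShear_rotate_apply_self, Fin.castSucc_ne_last,
        if_false, if_true, det_neg, det_one, Finset.prod_const, Finset.card_univ, Fintype.card_fin]
      rw [mul_one, ← pow_mul]
    have hperm : (comp _ _ n n R ((T * U).submatrix id (finRotate (m + 1)))).det =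
        s * (comp _ _ n n R T).det := by
      rw [show comp _ _ n n R ((T * U).submatrix id (finRotate (m + 1))) =
          (comp _ _ n n R (T * U)).submatrix id (Equiv.prodCongrLeft fun _ => finRotate (m + 1))
          from rfl, det_permute', Equiv.Perm.sign_prodCongrLeft, ← compRingEquiv_apply,
        map_mul, det_mul, compRingEquiv_apply, compRingEquiv_apply, det_continuantShear]
      simp [s, pow_mul']
    have hs : s * s = 1 := by rw [← pow_add, ← two_mul, pow_mul]; simp
    linear_combination (-s) * (hrot.symm.trans hperm) -
      ((comp _ _ n n R T).det - (continuant G (m + 2)).det) * hs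

end Tridiagonal

end BlockTridiagonal

open BlockTridiagonal in
theorem stmt_13_general (N W : ℕ) (hN : 1 ≤ N)
    (Au Bu Av Bv : Matrix (Fin W) (Fin W) ℝ)
    (hAu : IsUnit Au.det) (hAv : IsUnit Av.det)
    (S : Fin N → Matrix (Fin W) (Fin W) ℝ) (E : ℝ)
    (H : Matrix (Fin N × Fin W) (Fin N × Fin W) ℝ)
    (hH : ∀ (i j : Fin N) (x y : Fin W), H (i, x) (j, y) =
      if i = j then
        S i x y + (if (i : ℕ) = 0 then -(Bu * Au⁻¹) x y else 0)
          + (if (i : ℕ) + 1 = N then (Bv * Av⁻¹)ᵀ x y else 0)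
      else if (i : ℕ) + 1 = (j : ℕ) ∨ (j : ℕ) + 1 = (i : ℕ) then
        (if x = y then -1 else 0)
      else 0) :
    ((Matrix.fromRows Av Bv)ᵀ *
      ((List.ofFn fun k : Fin N =>
        (Matrix.fromBlocks (S k - E • 1) (-1) 1 0 :
          Matrix (Fin W ⊕ Fin W) (Fin W ⊕ Fin W) ℝ)).reverse.prod) *
      Matrix.fromRows Au Bu).det =
    Au.det * Av.det * (H - E • 1).det := by
  obtain ⟨k, rfl⟩ : ∃ k, N = k + 1 := ⟨N - 1, by omega⟩
  set D : ℕ → Matrix (Fin W) (Fin W) ℝ :=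
    fun i => if h : i < k + 1 then S ⟨i, h⟩ - E • 1 else 0
  set G : ℕ → Matrix (Fin W) (Fin W) ℝ := fun i =>
    D i + (if i = 0 then -(Bu * Au⁻¹) else 0) + (if i = k then (Bv * Av⁻¹)ᵀ else 0)
  have hprod : (List.ofFn fun i : Fin (k + 1) =>
      (fromBlocks (S i - E • 1) (-1) 1 0 :
        Matrix (Fin W ⊕ Fin W) (Fin W ⊕ Fin W) ℝ)).reverse.prod = transferProd D (k + 1) := by
    rw [← list_prod_eq_transferProd]
    simp [D, transferMatrix]
  have hH' : H - E • 1 = comp _ _ _ _ _ (blockTridiagonal (k + 1) G) := by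
    ext ⟨i, x⟩ ⟨j, y⟩
    rw [Matrix.sub_apply, hH, comp_blockTridiagonal_apply]
    by_cases hij : i = j
    · subst hij
      simp [G, D, Matrix.one_apply, Fin.is_le, -transpose_mul]
      split_ifs <;> simp <;> ring
    · simp [hij]
  rw [hprod, fromRows_eq_fromRows_one_mul hAu, transpose_fromRows_eq_mul_fromCols_one hAv, hH',
    det_comp_blockTridiagonal, ← fromCols_mul_transferProd_mul_fromRows, ← Matrix.mul_assoc _ _ Au,
    Matrix.mul_assoc Avᵀ, Matrix.mul_assoc Avᵀ, det_mul, det_mul, det_transpose]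
  ring

theorem stmt_13 (N W : ℕ) (hN : 1 ≤ N)
    (Au Bu Av Bv : Matrix (Fin W) (Fin W) ℝ)
    (hAu : IsUnit Au.det) (hAv : IsUnit Av.det)
    (S : Fin N → Matrix (Fin W) (Fin W) ℝ) (hS : ∀ k, (S k).IsSymm) (E : ℝ)
    (H : Matrix (Fin N × Fin W) (Fin N × Fin W) ℝ)
    (hH : ∀ (i j : Fin N) (x y : Fin W), H (i, x) (j, y) =
      if i = j then
        S i x y + (if (i : ℕ) = 0 then -(Bu * Au⁻¹) x y else 0)
          + (if (i : ℕ) + 1 = N then (Bv * Av⁻¹)ᵀ x y else 0)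
      else if (i : ℕ) + 1 = (j : ℕ) ∨ (j : ℕ) + 1 = (i : ℕ) then
        (if x = y then -1 else 0)
      else 0) :
    ((Matrix.fromRows Av Bv)ᵀ *
      ((List.ofFn fun k : Fin N =>
        (Matrix.fromBlocks (S k - E • 1) (-1) 1 0 :
          Matrix (Fin W ⊕ Fin W) (Fin W ⊕ Fin W) ℝ)).reverse.prod) *
      Matrix.fromRows Au Bu).det =
    Au.det * Av.det * (H - E • 1).det :=
  stmt_13_general N W hN Au Bu Av Bv hAu hAv S E H hH
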